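/- Let s and k be positive integers and let n = k·s. For each r ∈ {1,…,k}, let A_r and B_r be s×s Boolean matrices. Let A be the n×n Boolean matrix whose first s rows form the horizontal concatenation [A_1 A_2 … A_k] and whose remaining rows are zero, and let B be the n×n Boolean matrix whose first s columns form the vertical stack of B_1, …, B_k and whose remaining columns are zero. Then the Boolean product A∗B satisfies: (i) for all i, j ∈ {1,…,s}, (A∗B)[i,j] = ⋁_{r=1}^{k} (A_r ∗ B_r)[i,j]; and (ii) (A∗B)[i,j] = 0 whenever i > s or j > s; in particular |A∗B| ≤ s². (This is the block construction of Proposition 5.3 reducing the entrywise-OR of k independent Boolean matrix products to a single sparse Boolean matrix product.) -/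
import Mathlib


/-- The Boolean product of an m×n Boolean matrix and an n×m Boolean matrix:
`(A∗B)[i,j] = ⋁_{k∈[n]} A[i,k] ∧ B[k,j]`. -/
def boolProd {m n : ℕ} (A : Matrix (Fin m) (Fin n) Bool)
    (B : Matrix (Fin n) (Fin m) Bool) : Matrix (Fin m) (Fin m) Bool :=
  fun i j => decide (∃ k : Fin n, A i k = true ∧ B k j = true)

/-- Block construction of Proposition 5.3: with `n = k·s`, let the first `s`
rows of `A` be the horizontal concatenation `[A_1 … A_k]` (remaining rows zero),
and the first `s` columns of `B` be the vertical stack of `B_1,…,B_k`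
(remaining columns zero). Then (i) for `i, j ∈ {1,…,s}`,
`(A∗B)[i,j] = ⋁_{r=1}^{k} (A_r ∗ B_r)[i,j]`; and (ii) `(A∗B)[i,j] = 0` whenever
`i > s` or `j > s`; in particular `|A∗B| ≤ s²`. -/
theorem bmm_or_block_construction (s k n : ℕ) (hs : 0 < s) (hk : 0 < k)
    (hn : n = k * s)
    (Ar Br : Fin k → Matrix (Fin s) (Fin s) Bool)
    (A B : Matrix (Fin n) (Fin n) Bool)
    (hA : ∀ i j : Fin n, A i j =
      if hi : (i : ℕ) < s then
        Ar ⟨(j : ℕ) / s, (Nat.div_lt_iff_lt_mul hs).mpr (by rw [← hn]; exact j.isLt)⟩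
           ⟨(i : ℕ), hi⟩ ⟨(j : ℕ) % s, Nat.mod_lt _ hs⟩
      else false)
    (hB : ∀ i j : Fin n, B i j =
      if hj : (j : ℕ) < s then
        Br ⟨(i : ℕ) / s, (Nat.div_lt_iff_lt_mul hs).mpr (by rw [← hn]; exact i.isLt)⟩
           ⟨(i : ℕ) % s, Nat.mod_lt _ hs⟩ ⟨(j : ℕ), hj⟩
      else false) :
    (∀ i j : Fin n, (hi : (i : ℕ) < s) → (hj : (j : ℕ) < s) →
      (boolProd A B i j = true ↔
        ∃ r : Fin k, boolProd (Ar r) (Br r) ⟨(i : ℕ), hi⟩ ⟨(j : ℕ), hj⟩ = true)) ∧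
    (∀ i j : Fin n, s ≤ (i : ℕ) ∨ s ≤ (j : ℕ) → boolProd A B i j = false) ∧
    (Finset.univ.filter
      (fun p : Fin n × Fin n => boolProd A B p.1 p.2 = true)).card ≤ s ^ 2 := by
  have hprod : ∀ (i j : Fin n), boolProd A B i j = true ↔
      ∃ t : Fin n, A i t = true ∧ B t j = true := by
    intro i j
    simp [boolProd]
  refine ⟨?_, ?_, ?_⟩
  · intro i j hi hj
    rw [hprod]
    constructor
    · rintro ⟨t, hAt, hBt⟩
      rw [hA] at hAt; rw [hB] at hBt
      simp only [hi, hj, dif_pos] at hAt hBt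
      refine ⟨⟨(t : ℕ) / s, (Nat.div_lt_iff_lt_mul hs).mpr (by rw [← hn]; exact t.isLt)⟩, ?_⟩
      simp only [boolProd, decide_eq_true_eq]
      exact ⟨⟨(t : ℕ) % s, Nat.mod_lt _ hs⟩, hAt, hBt⟩
    · rintro ⟨r, hr⟩
      simp only [boolProd, decide_eq_true_eq] at hr
      obtain ⟨m, hAm, hBm⟩ := hr
      have htlt : (r : ℕ) * s + (m : ℕ) < n := by
        rw [hn]
        calc (r : ℕ) * s + (m : ℕ) < (r : ℕ) * s + s := by omega
        _ = ((r : ℕ) + 1) * s := by ring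
        _ ≤ k * s := Nat.mul_le_mul_right s r.isLt
      refine ⟨⟨(r : ℕ) * s + (m : ℕ), htlt⟩, ?_, ?_⟩
      · rw [hA]
        simp only [hi, dif_pos]
        have h1 : ((r : ℕ) * s + (m : ℕ)) / s = (r : ℕ) := by
          rw [Nat.add_comm, Nat.add_mul_div_right _ _ hs, Nat.div_eq_of_lt m.isLt, Nat.zero_add]
        have h2 : ((r : ℕ) * s + (m : ℕ)) % s = (m : ℕ) := by
          rw [Nat.add_comm, Nat.add_mul_mod_self_right, Nat.mod_eq_of_lt m.isLt]
        convert hAm using 2 <;> simp [h1, h2]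
      · rw [hB]
        simp only [hj, dif_pos]
        have h1 : ((r : ℕ) * s + (m : ℕ)) / s = (r : ℕ) := by
          rw [Nat.add_comm, Nat.add_mul_div_right _ _ hs, Nat.div_eq_of_lt m.isLt, Nat.zero_add]
        have h2 : ((r : ℕ) * s + (m : ℕ)) % s = (m : ℕ) := by
          rw [Nat.add_comm, Nat.add_mul_mod_self_right, Nat.mod_eq_of_lt m.isLt]
        convert hBm using 2 <;> simp [h1, h2]
  · intro i j h
    rw [Bool.eq_false_iff]
    intro hc
    rw [hprod] at hc
    obtain ⟨t, hAt, hBt⟩ := hc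
    rcases h with h | h
    · rw [hA] at hAt; simp [Nat.not_lt.mpr h] at hAt
    · rw [hB] at hBt; simp [Nat.not_lt.mpr h] at hBt
  · have hzero : ∀ i j : Fin n, s ≤ (i : ℕ) ∨ s ≤ (j : ℕ) → boolProd A B i j = false := by
      intro i j h
      rw [Bool.eq_false_iff]
      intro hc
      rw [hprod] at hc
      obtain ⟨t, hAt, hBt⟩ := hc
      rcases h with h | h
      · rw [hA] at hAt; simp [Nat.not_lt.mpr h] at hAt
      · rw [hB] at hBt; simp [Nat.not_lt.mpr h] at hBt
    calc (Finset.univ.filter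
        (fun p : Fin n × Fin n => boolProd A B p.1 p.2 = true)).card
        ≤ (Finset.univ : Finset (Fin s × Fin s)).card := by
          apply Finset.card_le_card_of_injOn
            (fun p => (⟨(p.1 : ℕ) % s, Nat.mod_lt _ hs⟩, ⟨(p.2 : ℕ) % s, Nat.mod_lt _ hs⟩))
          · intro p _; simp
          · intro p hp q hq hpq
            replace hp := (Finset.mem_filter.mp hp).2
            replace hq := (Finset.mem_filter.mp hq).2
            have hp1 : (p.1 : ℕ) < s := by
              by_contra h
              have := hzero p.1 p.2 (Or.inl (Nat.le_of_not_lt h)); exact Bool.noConfusion (this ▸ hp)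
            have hp2 : (p.2 : ℕ) < s := by
              by_contra h
              have := hzero p.1 p.2 (Or.inr (Nat.le_of_not_lt h)); exact Bool.noConfusion (this ▸ hp)
            have hq1 : (q.1 : ℕ) < s := by
              by_contra h
              have := hzero q.1 q.2 (Or.inl (Nat.le_of_not_lt h)); exact Bool.noConfusion (this ▸ hq)
            have hq2 : (q.2 : ℕ) < s := by
              by_contra h
              have := hzero q.1 q.2 (Or.inr (Nat.le_of_not_lt h)); exact Bool.noConfusion (this ▸ hq)
            rw [Prod.ext_iff] at hpq ⊢
            obtain ⟨h1, h2⟩ := hpq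
            simp only [Fin.mk.injEq, Nat.mod_eq_of_lt hp1, Nat.mod_eq_of_lt hp2,
              Nat.mod_eq_of_lt hq1, Nat.mod_eq_of_lt hq2] at h1 h2
            exact ⟨Fin.ext h1, Fin.ext h2⟩
      _ = s ^ 2 := by simp [sq]
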